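/- A polynomial p = Σᵢ cᵢxⁱ ∈ ℤ[x] lies in the subnearring of (ℤ[x], +, ∘) generated by {1, x³} if and only if cᵢ = 0 for all i not divisible by 3, and 3^⌊s₃(i)/2⌋ divides cᵢ for all i divisible by 3, where s₃(i) is the ternary digit sum of i. -/

import Mathlib

/-!
Write `E(n) = ⌊s₃(n)/2⌋`. Polynomials of the form `r(X³)` are stable under `p ↦ p ∘ r(X³)`,
which gives the support condition. For the divisibility condition the key point is that
`3^E(m) q^m` satisfies `3^E(k) ∣ [X^k]` whenever `q` does: write `m = 3^a + 3^b + d` with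
`s₃(d) = s₃(m) - 2`, so that `3^E(m) q^m = (3 q^(3^a) q^(3^b)) · 3^E(d) q^d`. Cubing preserves the
condition because the mixed terms of a cube carry a factor `3`, and since `s₃` is subadditive
(Legendre's formula) a product `3 f g` of two such polynomials even satisfies
`3^⌈s₃(k)/2⌉ ∣ [X^k]`, which is exactly what multiplying by a third one requires.

Conversely, by induction on `n` the nearring contains `3^E(n) X^(3n)`. From `u, v, w` in the
nearring the cube identities give `6uvw` and `3(u²v + uv²) = (u+v)³ - u³ - v³`. Splitting
`n = 3^a + 3^b + d` yields `2·3^E(n) X^(3n)`; splitting `n = i + 2j` with `i < j` yields an odd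
power of `3`, at least `3^E(n)`, times `X^(3n)`, the term `3u²v` having lower degree. The gcd of
the two coefficients is `3^E(n)`.
-/

open Polynomial

/-- Membership in the subnearring of `(ℤ[x], +, ∘)` generated by `S`:
the smallest subset of `ℤ[x]` containing `S` that is an additive subgroup
and is closed under composition of polynomials. -/
inductive NRGen (S : Set (Polynomial ℤ)) : Polynomial ℤ → Prop
  | mem {p : Polynomial ℤ} : p ∈ S → NRGen S p
  | zero : NRGen S 0
  | add {p q : Polynomial ℤ} : NRGen S p → NRGen S q → NRGen S (p + q)
  | neg {p : Polynomial ℤ} : NRGen S p → NRGen S (-p)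
  | comp {p q : Polynomial ℤ} : NRGen S p → NRGen S q → NRGen S (p.comp q)

namespace Nat

theorem digits_sum_add_base_mul {b r : ℕ} (hb : 1 < b) (hr : r < b) (q : ℕ) :
    (Nat.digits b (r + b * q)).sum = r + (Nat.digits b q).sum := by
  by_cases h : r = 0 ∧ q = 0
  · obtain ⟨rfl, rfl⟩ := h
    simp
  · rw [Nat.digits_add b hb r q hr (by tauto), List.sum_cons]

theorem digits_sum_add_le {p : ℕ} (hp : p.Prime) (m n : ℕ) :
    (Nat.digits p (m + n)).sum ≤ (Nat.digits p m).sum + (Nat.digits p n).sum := by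
  have := Fact.mk hp
  have hv : padicValNat p m.factorial + padicValNat p n.factorial ≤
      padicValNat p (m + n).factorial := by
    rw [← padicValNat.mul (Nat.factorial_ne_zero m) (Nat.factorial_ne_zero n),
      ← padicValNat_dvd_iff_le (Nat.factorial_ne_zero _)]
    exact pow_padicValNat_dvd.trans (Nat.factorial_mul_factorial_dvd_factorial_add m n)
  have legendre := Nat.mul_le_mul_left (p - 1) hv
  rw [mul_add, sub_one_mul_padicValNat_factorial, sub_one_mul_padicValNat_factorial,
    sub_one_mul_padicValNat_factorial] at legendre
  have := Nat.digit_sum_le p m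
  have := Nat.digit_sum_le p n
  have := Nat.digit_sum_le p (m + n)
  omega

theorem exists_eq_pow_add_digits_sum {b n : ℕ} (hb : 1 < b) (hn : n ≠ 0) :
    ∃ k c, n = b ^ k + c ∧ (Nat.digits b c).sum + 1 = (Nat.digits b n).sum := by
  induction n using Nat.strong_induction_on with
  | _ n ih =>
  have hdiv := Nat.mod_add_div n b
  have hlt := Nat.mod_lt n (by omega : 0 < b)
  rcases eq_or_ne (n % b) 0 with h0 | h0
  · have hq : n / b ≠ 0 := by
      intro h
      rw [h0, h] at hdiv
      omega
    obtain ⟨k, c, hc, hs⟩ := ih (n / b) (Nat.div_lt_self (by omega) hb) hq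
    refine ⟨k + 1, b * c, ?_, ?_⟩
    · rw [← hdiv, h0, hc]
      ring
    · rw [← zero_add (b * c), digits_sum_add_base_mul hb (by omega), ← hdiv, h0,
        digits_sum_add_base_mul hb (by omega)]
      omega
  · have hs : (Nat.digits b n).sum = n % b + (Nat.digits b (n / b)).sum := by
      conv_lhs => rw [← hdiv]
      exact digits_sum_add_base_mul hb hlt _
    refine ⟨0, n - 1, by rw [pow_zero]; omega, ?_⟩
    have e : n - 1 = (n % b - 1) + b * (n / b) := by omega
    rw [e, digits_sum_add_base_mul hb (by omega), hs]
    omega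

end Nat

namespace Polynomial

theorem mem_range_expand_iff {R : Type*} [CommSemiring R] {n : ℕ} (hn : n ≠ 0) {p : R[X]} :
    p ∈ Set.range (expand R n) ↔ ∀ i, ¬ n ∣ i → p.coeff i = 0 := by
  constructor
  · rintro ⟨r, rfl⟩ i hi
    rw [coeff_expand (Nat.pos_of_ne_zero hn), if_neg hi]
  · intro h
    refine ⟨contract n p, ?_⟩
    ext i
    rw [coeff_expand (Nat.pos_of_ne_zero hn), coeff_contract hn]
    split_ifs with hi
    · rw [Nat.div_mul_cancel hi]
    · exact (h i hi).symm

variable {R : Type*} [CommRing R]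

def coeffPowDvd (a : R) (f : ℕ → ℕ) : Submodule R R[X] where
  carrier := {p | ∀ k, a ^ f k ∣ p.coeff k}
  zero_mem' _ := by simp
  add_mem' hp hq k := by simpa only [coeff_add] using dvd_add (hp k) (hq k)
  smul_mem' r p hp k := by simpa only [coeff_smul, smul_eq_mul] using (hp k).mul_left r

variable {a : R} {f g h : ℕ → ℕ} {p q : R[X]}

theorem monomial_mem_coeffPowDvd {n : ℕ} {c : R} :
    monomial n c ∈ coeffPowDvd a f ↔ a ^ f n ∣ c := by
  refine ⟨fun h => by simpa using h n, fun h k => ?_⟩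
  rw [coeff_monomial]
  split_ifs with hk
  · exact hk ▸ h
  · exact dvd_zero _

theorem smul_mem_coeffPowDvd_succ (hp : p ∈ coeffPowDvd a f) :
    a • p ∈ coeffPowDvd a (fun k => f k + 1) := fun k => by
  rw [coeff_smul, smul_eq_mul, pow_succ']
  exact mul_dvd_mul_left a (hp k)

theorem mul_mem_coeffPowDvd (hfg : ∀ i j, h (i + j) ≤ f i + g j)
    (hp : p ∈ coeffPowDvd a f) (hq : q ∈ coeffPowDvd a g) : p * q ∈ coeffPowDvd a h := by
  intro k
  rw [coeff_mul]
  refine Finset.dvd_sum fun ⟨i, j⟩ hij => ?_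
  rw [Finset.HasAntidiagonal.mem_antidiagonal] at hij
  subst hij
  exact (pow_dvd_pow a (hfg i j)).trans (pow_add a _ _ ▸ mul_dvd_mul (hp i) (hq j))

end Polynomial

def halfDigitSum (n : ℕ) : ℕ := (Nat.digits 3 n).sum / 2

theorem halfDigitSum_three_mul (n : ℕ) : halfDigitSum (3 * n) = halfDigitSum n := by
  rw [halfDigitSum, ← zero_add (3 * n), Nat.digits_sum_add_base_mul (by norm_num) (by norm_num),
    zero_add, halfDigitSum]

theorem halfDigitSum_add_add_le (x y : ℕ) :
    halfDigitSum (x + y + y) ≤ halfDigitSum x + 1 + 2 * halfDigitSum y := by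
  have := Nat.digits_sum_add_le Nat.prime_three x y
  have := Nat.digits_sum_add_le Nat.prime_three (x + y) y
  simp only [halfDigitSum]
  omega

abbrev floorClass : Submodule ℤ ℤ[X] := coeffPowDvd 3 halfDigitSum

abbrev ceilClass : Submodule ℤ ℤ[X] := coeffPowDvd 3 fun n => ((Nat.digits 3 n).sum + 1) / 2

section FloorClass

variable {p q : ℤ[X]}

theorem one_mem_floorClass : (1 : ℤ[X]) ∈ floorClass := by
  rw [← monomial_zero_one, monomial_mem_coeffPowDvd]
  simp [halfDigitSum]

theorem X_pow_three_mem_floorClass : (X ^ 3 : ℤ[X]) ∈ floorClass := by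
  rw [← monomial_one_right_eq_X_pow, monomial_mem_coeffPowDvd]
  norm_num [halfDigitSum]

theorem three_smul_mul_mem_ceilClass (hp : p ∈ floorClass) (hq : q ∈ floorClass) :
    (3 : ℤ) • p * q ∈ ceilClass := by
  refine mul_mem_coeffPowDvd (fun i j => ?_) (smul_mem_coeffPowDvd_succ hp) hq
  have := Nat.digits_sum_add_le Nat.prime_three i j
  simp only [halfDigitSum]
  omega

theorem mul_mem_floorClass (hp : p ∈ ceilClass) (hq : q ∈ floorClass) : p * q ∈ floorClass := by
  refine mul_mem_coeffPowDvd (fun i j => ?_) hp hq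
  have := Nat.digits_sum_add_le Nat.prime_three i j
  simp only [halfDigitSum]
  omega

theorem pow_three_mem_floorClass (hp : p ∈ floorClass) : p ^ 3 ∈ floorClass := by
  have hmonomial (i : ℕ) : monomial i (p.coeff i) ∈ floorClass := monomial_mem_coeffPowDvd.2 (hp i)
  suffices ∀ s : Finset ℕ, (∑ i ∈ s, monomial i (p.coeff i)) ^ 3 ∈ floorClass by
    simpa only [← p.as_sum_support] using this p.support
  intro s
  induction s using Finset.induction_on with
  | empty => simp
  | insert i s hi ih =>
    set m := monomial i (p.coeff i)
    set e := ∑ j ∈ s, monomial j (p.coeff j)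
    have he : e ∈ floorClass := Submodule.sum_mem _ fun j _ => hmonomial j
    have hm : m ^ 3 ∈ floorClass := by
      rw [monomial_pow, monomial_mem_coeffPowDvd, mul_comm, halfDigitSum_three_mul]
      exact (hp i).trans (dvd_pow_self _ three_ne_zero)
    have hcube : (m + e) ^ 3 = m ^ 3 + (3 : ℤ) • m * m * e + (3 : ℤ) • m * e * e + e ^ 3 := by
      ring
    rw [Finset.sum_insert hi, hcube]
    refine add_mem (add_mem (add_mem hm ?_) ?_) ih
    · exact mul_mem_floorClass (three_smul_mul_mem_ceilClass (hmonomial i) (hmonomial i)) he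
    · exact mul_mem_floorClass (three_smul_mul_mem_ceilClass (hmonomial i) he) he

theorem pow_three_pow_mem_floorClass (hp : p ∈ floorClass) (k : ℕ) : p ^ 3 ^ k ∈ floorClass := by
  induction k with
  | zero => simpa using hp
  | succ k ih => simpa only [pow_succ, pow_mul] using pow_three_mem_floorClass ih

theorem smul_pow_mem_floorClass (hq : q ∈ floorClass) (m : ℕ) :
    (3 ^ halfDigitSum m : ℤ) • q ^ m ∈ floorClass := by
  induction m using Nat.strong_induction_on with
  | _ m ih =>
  rcases eq_or_ne m 0 with rfl | hm
  · simpa [halfDigitSum] using one_mem_floorClass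
  obtain ⟨k, c, rfl, hc⟩ := Nat.exists_eq_pow_add_digits_sum (by norm_num : 1 < 3) hm
  rcases eq_or_ne c 0 with rfl | hc0
  · exact Submodule.smul_mem _ _ (pow_three_pow_mem_floorClass hq k)
  obtain ⟨k', d, rfl, hd⟩ := Nat.exists_eq_pow_add_digits_sum (by norm_num : 1 < 3) hc0
  have hE : halfDigitSum (3 ^ k + (3 ^ k' + d)) = halfDigitSum d + 1 := by
    simp only [halfDigitSum]
    omega
  have hsplit : (3 ^ halfDigitSum (3 ^ k + (3 ^ k' + d)) : ℤ) • q ^ (3 ^ k + (3 ^ k' + d)) =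
      (3 : ℤ) • q ^ 3 ^ k * q ^ 3 ^ k' * ((3 ^ halfDigitSum d : ℤ) • q ^ d) := by
    rw [hE]
    ring
  rw [hsplit]
  refine mul_mem_floorClass (three_smul_mul_mem_ceilClass (pow_three_pow_mem_floorClass hq k)
    (pow_three_pow_mem_floorClass hq k')) (ih d ?_)
  have := Nat.one_le_pow k 3 (by norm_num)
  have := Nat.one_le_pow k' 3 (by norm_num)
  omega

theorem comp_mem_floorClass (hp : p ∈ floorClass) (hq : q ∈ floorClass) :
    p.comp q ∈ floorClass := by
  rw [comp_eq_sum_left]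
  refine Submodule.sum_mem _ fun m _ => ?_
  obtain ⟨c, hc⟩ := hp m
  dsimp only
  rw [hc, ← smul_eq_C_mul, mul_comm, mul_smul]
  exact Submodule.smul_mem _ c (smul_pow_mem_floorClass hq m)

end FloorClass

theorem AddSubgroup.pow_mem_of_two_mul_pow_mem {L : AddSubgroup ℤ} {a : ℤ} (ha : Odd a)
    {e f : ℕ} (hef : e ≤ f) (h2 : 2 * a ^ e ∈ L) (hf : a ^ f ∈ L) : a ^ e ∈ L := by
  obtain ⟨u, hu⟩ := ha.pow (n := f - e)
  have : a ^ e = a ^ f - u • (2 * a ^ e) := by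
    rw [smul_eq_mul, ← Nat.add_sub_cancel' hef, pow_add, hu]
    ring
  rw [this]
  exact L.sub_mem hf (L.zsmul_mem h2 u)

namespace NRGen

variable {S : Set ℤ[X]} {p q r : ℤ[X]}

def addSubgroup (S : Set ℤ[X]) : AddSubgroup ℤ[X] where
  carrier := {p | NRGen S p}
  zero_mem' := zero
  add_mem' := add
  neg_mem' := neg

theorem sub (hp : NRGen S p) (hq : NRGen S q) : NRGen S (p - q) := by
  simpa [sub_eq_add_neg] using hp.add hq.neg

theorem pow_three (hX : X ^ 3 ∈ S) (hp : NRGen S p) : NRGen S (p ^ 3) := by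
  simpa using (mem hX).comp hp

theorem X_pow_three_pow (hX : X ^ 3 ∈ S) (k : ℕ) : NRGen S (X ^ (3 * 3 ^ k)) := by
  induction k with
  | zero => simpa using mem hX
  | succ k ih =>
    rw [pow_succ, ← mul_assoc, pow_mul]
    exact ih.pow_three hX

theorem three_mul_sq_mul_add (hX : X ^ 3 ∈ S) (hp : NRGen S p) (hq : NRGen S q) :
    NRGen S (3 * (p ^ 2 * q + p * q ^ 2)) := by
  convert (((hp.add hq).pow_three hX).sub (hp.pow_three hX)).sub (hq.pow_three hX) using 1
  ring

theorem six_mul_mul_mul (hX : X ^ 3 ∈ S) (hp : NRGen S p) (hq : NRGen S q) (hr : NRGen S r) :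
    NRGen S (6 * (p * q * r)) := by
  have hcube {s : ℤ[X]} (hs : NRGen S s) := hs.pow_three hX
  convert ((((((hcube ((hp.add hq).add hr)).sub (hcube (hp.add hq))).sub
    (hcube (hp.add hr))).sub (hcube (hq.add hr))).add (hcube hp)).add (hcube hq)).add
    (hcube hr) using 1
  ring

theorem mem_range_expand {n : ℕ} (hS : S ⊆ Set.range (expand ℤ n)) (hp : NRGen S p) :
    p ∈ Set.range (expand ℤ n) := by
  induction hp with
  | mem h => exact hS h
  | zero => exact ⟨0, map_zero _⟩
  | add _ _ ihp ihq =>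
    obtain ⟨p', rfl⟩ := ihp
    obtain ⟨q', rfl⟩ := ihq
    exact ⟨p' + q', map_add _ _ _⟩
  | neg _ ihp =>
    obtain ⟨p', rfl⟩ := ihp
    exact ⟨-p', map_neg _ _⟩
  | @comp p _ _ _ _ ihq =>
    obtain ⟨q', rfl⟩ := ihq
    exact ⟨p.comp q', by rw [expand_eq_comp_X_pow, expand_eq_comp_X_pow, comp_assoc]⟩

theorem mem_floorClass (hS : S ⊆ floorClass) (hp : NRGen S p) : p ∈ floorClass := by
  induction hp with
  | mem h => exact hS h
  | zero => exact zero_mem _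
  | add _ _ ihp ihq => exact add_mem ihp ihq
  | neg _ ihp => exact neg_mem ihp
  | comp _ _ ihp ihq => exact comp_mem_floorClass ihp ihq

noncomputable def coeffSubgroup (S : Set ℤ[X]) (n : ℕ) : AddSubgroup ℤ :=
  (addSubgroup S).comap (monomial n).toAddMonoidHom

theorem mem_coeffSubgroup {n : ℕ} {c : ℤ} :
    c ∈ coeffSubgroup S n ↔ NRGen S (monomial n c) := Iff.rfl

theorem mem_coeffSubgroup_of_dvd {n : ℕ} {a c : ℤ} (ha : a ∈ coeffSubgroup S n) (hac : a ∣ c) :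
    c ∈ coeffSubgroup S n := by
  obtain ⟨d, rfl⟩ := hac
  simpa [mul_comm] using (coeffSubgroup S n).zsmul_mem ha d

theorem six_mul_mem_coeffSubgroup (hX : X ^ 3 ∈ S) (k k' : ℕ) {m : ℕ} {c : ℤ}
    (hc : c ∈ coeffSubgroup S m) : 6 * c ∈ coeffSubgroup S (3 * 3 ^ k + 3 * 3 ^ k' + m) := by
  rw [mem_coeffSubgroup] at hc ⊢
  convert six_mul_mul_mul hX (X_pow_three_pow hX k) (X_pow_three_pow hX k') hc using 1
  simp only [← C_mul_X_pow_eq_monomial, map_mul, map_ofNat]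
  ring

theorem three_mul_mul_sq_mem_coeffSubgroup (hX : X ^ 3 ∈ S) {i j : ℕ} {a b : ℤ}
    (ha : a ∈ coeffSubgroup S i) (hb : b ∈ coeffSubgroup S j)
    (hlow : 3 * a ^ 2 * b ∈ coeffSubgroup S (2 * i + j)) :
    3 * a * b ^ 2 ∈ coeffSubgroup S (i + 2 * j) := by
  rw [mem_coeffSubgroup] at ha hb hlow ⊢
  convert (three_mul_sq_mul_add hX ha hb).sub hlow using 1
  simp only [← C_mul_X_pow_eq_monomial, map_mul, map_pow, map_ofNat]
  ring

theorem three_pow_mem_coeffSubgroup_of_lt (hX : X ^ 3 ∈ S) {i j : ℕ} (hij : i < j)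
    (ih : ∀ m < i + 2 * j, (3 ^ halfDigitSum m : ℤ) ∈ coeffSubgroup S (3 * m)) :
    (3 ^ (halfDigitSum i + 1 + 2 * halfDigitSum j) : ℤ) ∈ coeffSubgroup S (3 * (i + 2 * j)) := by
  have hlow : 3 * (3 ^ halfDigitSum i) ^ 2 * 3 ^ halfDigitSum j ∈
      coeffSubgroup S (2 * (3 * i) + 3 * j) := by
    rw [show 2 * (3 * i) + 3 * j = 3 * (j + i + i) by ring, ← pow_mul, ← pow_succ', ← pow_add]
    refine mem_coeffSubgroup_of_dvd (ih _ (by omega)) (pow_dvd_pow 3 ?_)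
    have := halfDigitSum_add_add_le j i
    omega
  have h3 := three_mul_mul_sq_mem_coeffSubgroup hX (ih i (by omega)) (ih j (by omega)) hlow
  rwa [show 3 * i + 2 * (3 * j) = 3 * (i + 2 * j) by ring, ← pow_mul, ← pow_succ', ← pow_add,
    mul_comm (halfDigitSum j)] at h3

theorem three_pow_halfDigitSum_mem (h1 : 1 ∈ S) (hX : X ^ 3 ∈ S) (n : ℕ) :
    (3 ^ halfDigitSum n : ℤ) ∈ coeffSubgroup S (3 * n) := by
  induction n using Nat.strong_induction_on with
  | _ n ih =>
  rcases eq_or_ne n 0 with rfl | hn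
  · simpa [mem_coeffSubgroup, halfDigitSum] using mem h1
  obtain ⟨k, c, rfl, hc⟩ := Nat.exists_eq_pow_add_digits_sum (by norm_num : 1 < 3) hn
  rcases eq_or_ne c 0 with rfl | hc0
  · refine mem_coeffSubgroup_of_dvd ?_ (one_dvd _)
    rw [add_zero, mem_coeffSubgroup, monomial_one_right_eq_X_pow]
    exact X_pow_three_pow hX k
  obtain ⟨k', d, rfl, hd⟩ := Nat.exists_eq_pow_add_digits_sum (by norm_num : 1 < 3) hc0
  set n := 3 ^ k + (3 ^ k' + d) with hn_def
  have h3k := Nat.one_le_pow k 3 (by norm_num)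
  have h3k' := Nat.one_le_pow k' 3 (by norm_num)
  have hA : 2 * 3 ^ halfDigitSum n ∈ coeffSubgroup S (3 * n) := by
    have hE : halfDigitSum n = halfDigitSum d + 1 := by
      simp only [halfDigitSum]
      omega
    have h6 := six_mul_mem_coeffSubgroup hX k k' (ih d (by omega))
    rwa [show 3 * 3 ^ k + 3 * 3 ^ k' + 3 * d = 3 * n by omega,
      show (6 : ℤ) * 3 ^ halfDigitSum d = 2 * 3 ^ halfDigitSum n by rw [hE]; ring] at h6
  have hn3 : n ≠ 3 := by
    intro h
    have : (Nat.digits 3 3).sum = 1 := by norm_num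
    rw [h] at hc
    omega
  have hB := three_pow_mem_coeffSubgroup_of_lt hX (i := n % 2) (j := n / 2) (by omega)
    fun m hm => ih m (by omega)
  rw [show n % 2 + 2 * (n / 2) = n by omega] at hB
  refine AddSubgroup.pow_mem_of_two_mul_pow_mem (by decide) ?_ hA hB
  have := halfDigitSum_add_add_le (n % 2) (n / 2)
  rwa [show n % 2 + n / 2 + n / 2 = n by omega] at this

theorem of_forall_coeff (h1 : 1 ∈ S) (hX : X ^ 3 ∈ S) {p : ℤ[X]}
    (hsupp : ∀ i, ¬ 3 ∣ i → p.coeff i = 0)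
    (hdvd : ∀ i, 3 ∣ i → (3 : ℤ) ^ halfDigitSum i ∣ p.coeff i) : NRGen S p := by
  rw [p.as_sum_support]
  refine (addSubgroup S).sum_mem fun i hi => ?_
  obtain ⟨k, rfl⟩ : 3 ∣ i := by_contra fun h => mem_support_iff.1 hi (hsupp i h)
  obtain ⟨c, hc⟩ := hdvd _ ⟨k, rfl⟩
  rw [hc, halfDigitSum_three_mul]
  exact mem_coeffSubgroup_of_dvd (three_pow_halfDigitSum_mem h1 hX k) (dvd_mul_right _ _)

end NRGen

theorem mem_gen_1_x3 (p : Polynomial ℤ) :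
    NRGen {1, X ^ 3} p ↔
      (∀ i : ℕ, ¬ 3 ∣ i → p.coeff i = 0) ∧
        ∀ i : ℕ, 3 ∣ i → (3 : ℤ) ^ ((Nat.digits 3 i).sum / 2) ∣ p.coeff i := by
  have h1 : (1 : ℤ[X]) ∈ ({1, X ^ 3} : Set ℤ[X]) := Set.mem_insert _ _
  have hX : (X ^ 3 : ℤ[X]) ∈ ({1, X ^ 3} : Set ℤ[X]) := Set.mem_insert_of_mem _ rfl
  refine ⟨fun hp => ⟨?_, fun i _ => ?_⟩,
    fun ⟨hsupp, hdvd⟩ => NRGen.of_forall_coeff h1 hX hsupp hdvd⟩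
  · refine (mem_range_expand_iff three_ne_zero).1 (hp.mem_range_expand ?_)
    rintro q (rfl | rfl)
    exacts [⟨1, map_one _⟩, ⟨X, expand_X 3⟩]
  · refine hp.mem_floorClass ?_ i
    rintro q (rfl | rfl)
    exacts [one_mem_floorClass, X_pow_three_mem_floorClass]
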